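/- Let T be a finite set of Wang tiles and let σ_T be the two-dimensional substitution on the alphabet A = T × {→,↑,←,↓} defined as follows: σ_base((a,d)) = {[(0,0),(a,d)]} for every (a,d) ∈ A, and the concatenation rules are in bijection with the unordered dominoes {[(0,0),(a,d)],[u,(b,d')]}, u ∈ {(1,0),(−1,0),(0,1),(0,−1)}, such that the colors of the Wang tiles a and b agree on the shared edge when b is placed at position u relative to a, and exactly one of the two arrows points at the other cell (i.e., exactly one of 'd is the direction of u' and 'd' is the direction of −u' holds); the image vector of each such rule places the image of the pointing cell immediately to the left of the image of the pointed cell: σ_rule(pointing cell, pointed cell) = (1,0). Then T admits a valid tiling of a cycle if and only if σ_T is not consistent. -/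

import Mathlib

open scoped Classical

/-- A combinatorial substitution on alphabet `A` with vectors in `V`:
a base rule sending each letter to a pattern, together with a deterministic
finite set of concatenation rules.  `rule t t' u = some v` encodes the
concatenation rule `(t, t', u) ↦ v`. -/
structure Subst (A : Type*) (V : Type*) [AddCommGroup V] where
  /-- the base rule -/
  base : A → Finset (V × A)
  /-- the image of a letter is a pattern: its cells have distinct vectors -/
  basePat : ∀ t : A, ∀ c ∈ base t, ∀ c' ∈ base t, c.1 = c'.1 → c = c'
  /-- the concatenation rules, as a partial function -/
  rule : A → A → V → Option V
  /-- there are finitely many concatenation rules -/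
  finiteRules : {u : V | ∃ t t', rule t t' u ≠ none}.Finite
  /-- determinism: no two rules with left-hand sides `(t,t',u)` and `(t,t',-u)` -/
  det : ∀ t t' u, (rule t t' u).isSome → (rule t t' (-u)).isSome → u = -u

/-- A pattern is a finite set of cells with pairwise distinct vectors. -/
def IsPattern {V A : Type*} (P : Finset (V × A)) : Prop :=
  ∀ c ∈ P, ∀ c' ∈ P, c.1 = c'.1 → c = c'

namespace Subst

variable {A V : Type*} [AddCommGroup V]

/-- `σ_rule(c, c')`: the relative position of the images of the two cells
`c`, `c'`, when some concatenation rule applies to them. -/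
def ruleVec (σ : Subst A V) (c c' : V × A) : Option V :=
  match σ.rule c.2 c'.2 (c'.1 - c.1) with
  | some v => some v
  | none => (σ.rule c'.2 c.2 (c.1 - c'.1)).map (fun v => -v)

/-- The image vector `ω_σ(γ)` of a path `γ`. -/
def omega (σ : Subst A V) (γ : List (V × A)) : V :=
  ((γ.zip γ.tail).map (fun p => (σ.ruleVec p.1 p.2).getD 0)).sum

/-- A `C_σ`-path: a nonempty sequence of cells in which any two consecutive
cells form a translated copy of a starting pattern of `σ`, and any two cells
with the same vector are equal. -/
def IsPath (σ : Subst A V) (γ : List (V × A)) : Prop :=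
  γ ≠ [] ∧ γ.Chain' (fun c c' => (σ.ruleVec c c').isSome) ∧
    ∀ c ∈ γ, ∀ c' ∈ γ, c.1 = c'.1 → c = c'

/-- A `C_σ`-path of the pattern `P`. -/
def IsPathOf (σ : Subst A V) (P : Finset (V × A)) (γ : List (V × A)) : Prop :=
  σ.IsPath γ ∧ ∀ c ∈ γ, c ∈ P

/-- A `C_σ`-loop of the pattern `P`. -/
def IsLoopOf (σ : Subst A V) (P : Finset (V × A)) (γ : List (V × A)) : Prop :=
  σ.IsPathOf P γ ∧ γ.head? = γ.getLast?

/-- `P` is `C_σ`-covered: any two of its cells are joined by a `C_σ`-path of `P`. -/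
def Covered (σ : Subst A V) (P : Finset (V × A)) : Prop :=
  ∀ c ∈ P, ∀ c' ∈ P,
    ∃ γ, σ.IsPathOf P γ ∧ γ.head? = some c ∧ γ.getLast? = some c'

/-- `σ` is consistent on `P`: any two `C_σ`-paths of `P` with the same first
and last cells have the same image vector. -/
def ConsistentOn (σ : Subst A V) (P : Finset (V × A)) : Prop :=
  ∀ γ γ' : List (V × A), σ.IsPathOf P γ → σ.IsPathOf P γ' →
    γ.head? = γ'.head? → γ.getLast? = γ'.getLast? → σ.omega γ = σ.omega γ'

/-- `σ` is consistent: it is consistent on every `C_σ`-covered pattern. -/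
def Consistent (σ : Subst A V) : Prop :=
  ∀ P : Finset (V × A), IsPattern P → σ.Covered P → σ.ConsistentOn P

/-- The support of the image of a letter. -/
noncomputable def supp (σ : Subst A V) (t : A) : Finset V :=
  (σ.base t).image Prod.fst

/-- `σ` is non-overlapping on `P`: the images of two distinct cells of `P`
joined by a `C_σ`-path of `P` have disjoint supports. -/
def NonOverlappingOn (σ : Subst A V) (P : Finset (V × A)) : Prop :=
  ∀ c ∈ P, ∀ c' ∈ P, c ≠ c' → ∀ γ, σ.IsPathOf P γ →
    γ.head? = some c → γ.getLast? = some c' →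
    ∀ b ∈ σ.supp c'.2, σ.omega γ + b ∉ σ.supp c.2

/-- `σ` is non-overlapping: it is non-overlapping on every `C_σ`-covered pattern. -/
def NonOverlapping (σ : Subst A V) : Prop :=
  ∀ P : Finset (V × A), IsPattern P → σ.Covered P → σ.NonOverlappingOn P

end Subst

/-- A Wang tile: a unit square with a color on each of its four edges. -/
structure WangTile (C : Type*) where
  north : C
  south : C
  east : C
  west : C

/-- The four arrow decorations. -/
inductive Dir : Type where
  | right : Dir
  | up : Dir
  | left : Dir
  | down : Dir
deriving DecidableEq

instance : Fintype Dir :=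
  ⟨{Dir.right, Dir.up, Dir.left, Dir.down}, by intro x; cases x <;> simp⟩

/-- The unit vector associated with a direction. -/
def dirVec : Dir → ℤ × ℤ
  | .right => (1, 0)
  | .up => (0, 1)
  | .left => (-1, 0)
  | .down => (0, -1)

/-- The colors of the Wang tiles `a` and `b` agree on the shared edge when
`b` is placed at position `u` relative to `a` (in particular `u` is a unit
vector). -/
def WangMatch {C : Type*} (a b : WangTile C) (u : ℤ × ℤ) : Prop :=
  (u = (1, 0) ∧ a.east = b.west) ∨ (u = (-1, 0) ∧ a.west = b.east) ∨
  (u = (0, 1) ∧ a.north = b.south) ∨ (u = (0, -1) ∧ a.south = b.north)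

/-- `T` admits a valid tiling of a cycle: a nontrivial cyclic sequence of
translates of tiles of `T` in which consecutive tiles are adjacent and match
in color. -/
def AdmitsCycle {C : Type*} (T : Finset (WangTile C)) : Prop :=
  ∃ (n : ℕ) (a : ℕ → WangTile C) (p : ℕ → ℤ × ℤ),
    5 ≤ n ∧ (∀ i < n, a i ∈ T) ∧
    (∀ i < n - 1, ∀ j < n - 1, p i = p j → i = j) ∧
    p (n - 1) = p 0 ∧ a (n - 1) = a 0 ∧
    ∀ i < n - 1, WangMatch (a i) (a (i + 1)) (p (i + 1) - p i)

/-- The substitution `σ_T` built from a Wang tile set `T`: letters are tiles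
of `T` decorated with an arrow, the base rule sends every letter to a single
cell at the origin, and the concatenation rules correspond exactly to the
matching dominoes of tiles of `T` in which exactly one arrow points at the
other cell, the image of the pointing cell being placed immediately to the
left of the image of the pointed cell. -/
noncomputable def sigmaT {C : Type*} (T : Finset (WangTile C)) :
    Subst (WangTile C × Dir) (ℤ × ℤ) where
  base t := {((0, 0), t)}
  basePat := by
    intro t c hc c' hc' _
    rw [Finset.mem_singleton] at hc hc'
    rw [hc, hc']
  rule t t' u :=
    if t.1 ∈ T ∧ t'.1 ∈ T ∧ WangMatch t.1 t'.1 u ∧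
        dirVec t.2 = u ∧ dirVec t'.2 ≠ -u
    then some (1, 0) else none
  finiteRules := by
    apply Set.Finite.subset (Set.finite_range dirVec)
    rintro u ⟨t, t', h⟩
    try simp only at h
    split_ifs at h with hc
    · exact ⟨t.2, hc.2.2.2.1⟩
    · exact absurd rfl h
  det := by
    intro t t' u h1 h2
    try simp only at h1 h2
    split_ifs at h1 with hA
    · split_ifs at h2 with hB
      · exact hA.2.2.2.1.symm.trans hB.2.2.2.1
      · simp at h2
    · simp at h1

/-!
Decorating every cell of a cycle of tiles with the arrow towards the next cell turns each
consecutive pair into a concatenation rule with image vector `(1,0)`; going once around a cycle of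
length `m` then has image vector `(m,0) ≠ 0`, while the trivial path at the same cell has image
vector `0`.

Conversely, two paths with the same ends and different image vectors close up into a loop with
nonzero image vector. Cutting a loop at a repeated cell splits its image vector between two
shorter loops, so some loop without repeated cells has nonzero image vector. Its positions form a
cycle of matching tiles, of length at least `4`: the length is even because every step changes
`x + y` by an odd amount, and it is not `2` because the image vectors of the rules are
antisymmetric.
-/

theorem List.exists_eq_append_cons_append_cons_of_not_nodup {α : Type*} {l : List α}
    (h : ¬ l.Nodup) : ∃ x s t u, l = s ++ x :: t ++ x :: u := by
  obtain ⟨x, hx⟩ : ∃ x, List.Sublist [x, x] l := by simpa [List.nodup_iff_sublist] using h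
  obtain ⟨r₁, r₂, rfl, hx₁, hx₂⟩ := List.cons_sublist_iff.1 hx
  obtain ⟨s, t, rfl⟩ := List.append_of_mem hx₁
  obtain ⟨t', u, rfl⟩ := List.append_of_mem (List.singleton_sublist.1 hx₂)
  exact ⟨x, s, t ++ t', u, by simp⟩

theorem List.isChain_map_range {α : Type*} {R : α → α → Prop} {f : ℕ → α} {k : ℕ}
    (h : ∀ t < k, R (f t) (f (t + 1))) : ((List.range (k + 1)).map f).IsChain R := by
  rw [List.isChain_map, List.isChain_range]
  simpa using h

theorem List.IsChain.getD {α : Type*} {R : α → α → Prop} {l : List α} (h : l.IsChain R)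
    (d : α) {i : ℕ} (hi : i + 1 < l.length) : R (l.getD i d) (l.getD (i + 1) d) := by
  rw [List.getD_eq_getElem _ _ (by omega), List.getD_eq_getElem _ _ hi]
  exact List.isChain_iff_getElem.1 h i hi

theorem even_of_odd_increments {s : ℕ → ℤ} {k : ℕ} (hs : ∀ i < k, Odd (s (i + 1) - s i))
    (hk : s k = s 0) : Even k := by
  have key : ∀ j ≤ k, Even (s j - s 0 + j) := by
    intro j hj
    induction j with
    | zero => simp
    | succ j ih =>
      have e : s (j + 1) - s 0 + ((j + 1 : ℕ) : ℤ) =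
          (s j - s 0 + j) + (s (j + 1) - s j + 1) := by
        push_cast
        ring
      rw [e]
      exact (ih (by omega)).add ((hs j (by omega)).add_one)
  simpa [hk] using key k le_rfl

namespace Subst

variable {A V : Type*} [AddCommGroup V] (σ : Subst A V)

/-- `σ_rule(c, c')`, with the junk value `0` when no rule applies to `c, c'`. -/
def stepVec (c c' : V × A) : V := (σ.ruleVec c c').getD 0

@[simp]
theorem omega_nil : σ.omega [] = 0 := rfl

@[simp]
theorem omega_singleton (c : V × A) : σ.omega [c] = 0 := rfl

theorem omega_cons_cons (c c' : V × A) (l : List (V × A)) :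
    σ.omega (c :: c' :: l) = σ.stepVec c c' + σ.omega (c' :: l) := rfl

theorem omega_append_cons (l₁ : List (V × A)) (c : V × A) (l₂ : List (V × A)) :
    σ.omega (l₁ ++ c :: l₂) = σ.omega (l₁ ++ [c]) + σ.omega (c :: l₂) := by
  induction l₁ with
  | nil => simp
  | cons a l ih =>
    cases l with
    | nil => simp [omega_cons_cons]
    | cons b l =>
      simp only [List.cons_append] at ih ⊢
      rw [omega_cons_cons, omega_cons_cons, ih, add_assoc]

theorem omega_reverse (hσ : ∀ c c', σ.stepVec c' c = -σ.stepVec c c') :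
    ∀ l : List (V × A), σ.omega l.reverse = -σ.omega l
  | [] => by simp
  | [c] => by simp
  | c :: c' :: l => by
    rw [List.reverse_cons, List.reverse_cons, List.append_assoc, List.singleton_append,
      omega_append_cons, ← List.reverse_cons, omega_reverse hσ (c' :: l), omega_cons_cons,
      omega_cons_cons, hσ, omega_singleton]
    abel

theorem omega_eq_nsmul {v : V} :
    ∀ {l : List (V × A)}, l.IsChain (fun c c' => σ.stepVec c c' = v) →
      σ.omega l = (l.length - 1) • v
  | [], _ => by simp
  | [c], _ => by simp
  | c :: c' :: l, h => by
    rw [List.isChain_cons_cons] at h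
    rw [omega_cons_cons, h.1, omega_eq_nsmul h.2]
    simp [succ_nsmul']

theorem omega_eq_sum_getD (d : V × A) :
    ∀ l : List (V × A), σ.omega l =
      ∑ i ∈ Finset.range (l.length - 1), σ.stepVec (l.getD i d) (l.getD (i + 1) d)
  | [] => by simp
  | [c] => by simp
  | c :: c' :: l => by
    rw [omega_cons_cons, omega_eq_sum_getD d (c' :: l)]
    simp [Finset.sum_range_succ' _ (l.length), add_comm]

theorem isSome_ruleVec_comm (c c' : V × A) :
    (σ.ruleVec c' c).isSome = (σ.ruleVec c c').isSome := by
  unfold ruleVec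
  split <;> split <;> simp_all

variable {σ} {P : Finset (V × A)} {γ γ' : List (V × A)}

theorem isPathOf_of_isPattern (hP : IsPattern P) (hne : γ ≠ [])
    (hchain : γ.IsChain fun c c' => (σ.ruleVec c c').isSome) (hmem : ∀ c ∈ γ, c ∈ P) :
    σ.IsPathOf P γ :=
  ⟨⟨hne, hchain, fun c hc c' hc' => hP c (hmem c hc) c' (hmem c' hc')⟩, hmem⟩

theorem IsPathOf.of_subset (hγ : σ.IsPathOf P γ) (hne : γ' ≠ [])
    (hchain : γ'.IsChain fun c c' => (σ.ruleVec c c').isSome) (hsub : γ' ⊆ γ) :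
    σ.IsPathOf P γ' :=
  ⟨⟨hne, hchain, fun c hc c' hc' => hγ.1.2.2 c (hsub hc) c' (hsub hc')⟩,
    fun c hc => hγ.2 c (hsub hc)⟩

theorem IsPathOf.reverse (hγ : σ.IsPathOf P γ) : σ.IsPathOf P γ.reverse :=
  hγ.of_subset (by simpa using hγ.1.1)
    (List.isChain_reverse.2 (hγ.1.2.1.imp fun c c' h => by rwa [isSome_ruleVec_comm]))
    (fun _ => List.mem_reverse.1)

theorem isPathOf_map_range (hP : IsPattern P) {f : ℕ → V × A} {k : ℕ} {v : V}
    (hf : ∀ t < k, σ.ruleVec (f t) (f (t + 1)) = some v) (hmem : ∀ t, f t ∈ P) :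
    σ.IsPathOf P ((List.range (k + 1)).map f) :=
  isPathOf_of_isPattern hP (by simp)
    (List.isChain_map_range fun t ht => by simp [hf t ht]) (by simp [hmem])

theorem omega_map_range {f : ℕ → V × A} {k : ℕ} {v : V}
    (hf : ∀ t < k, σ.ruleVec (f t) (f (t + 1)) = some v) :
    σ.omega ((List.range (k + 1)).map f) = k • v := by
  rw [omega_eq_nsmul σ (v := v) (List.isChain_map_range fun t ht => by simp [stepVec, hf t ht])]
  simp

theorem not_consistent_of_zmod_cycle {m : ℕ} [NeZero m] {cell : ZMod m → V × A} {v : V}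
    (hinj : Function.Injective fun i => (cell i).1)
    (hrule : ∀ i, σ.ruleVec (cell i) (cell (i + 1)) = some v) (hv : m • v ≠ 0) :
    ¬ σ.Consistent := by
  let P : Finset (V × A) := Finset.univ.image cell
  have hP : IsPattern P := by
    simp only [IsPattern, P, Finset.mem_image, Finset.mem_univ, true_and]
    rintro _ ⟨i, rfl⟩ _ ⟨j, rfl⟩ h
    rw [hinj h]
  let walk (i : ZMod m) (k : ℕ) : List (V × A) :=
    (List.range (k + 1)).map fun t : ℕ => cell (i + t)
  have hstep (i : ZMod m) (t : ℕ) :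
      σ.ruleVec (cell (i + t)) (cell (i + (t + 1 : ℕ))) = some v := by
    rw [Nat.cast_succ, ← add_assoc]
    exact hrule _
  have hpath (i : ZMod m) (k : ℕ) : σ.IsPathOf P (walk i k) :=
    isPathOf_map_range hP (fun t _ => hstep i t) (by simp [P])
  have hhead (i : ZMod m) (k : ℕ) : (walk i k).head? = some (cell i) := by
    simp [walk, List.head?_range]
  have hlast (i : ZMod m) (k : ℕ) : (walk i k).getLast? = some (cell (i + k)) := by
    simp [walk, List.getLast?_range]
  have hcovered : σ.Covered P := by
    simp only [Covered, P, Finset.mem_image, Finset.mem_univ, true_and]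
    rintro _ ⟨i, rfl⟩ _ ⟨j, rfl⟩
    exact ⟨walk i (j - i).val, hpath _ _, hhead _ _, by
      rw [hlast, ZMod.natCast_zmod_val, add_sub_cancel]⟩
  intro hcons
  have h := hcons P hP hcovered (walk 0 m) (walk 0 0) (hpath 0 m) (hpath 0 0)
    (by rw [hhead, hhead]) (by simp [hlast])
  rw [omega_map_range (fun t _ => hstep 0 t), omega_map_range (fun t _ => hstep 0 t),
    zero_smul] at h
  exact hv h

theorem IsPathOf.exists_isLoopOf_omega_eq_sub (hP : IsPattern P)
    (hσ : ∀ c c', σ.stepVec c' c = -σ.stepVec c c') (hγ : σ.IsPathOf P γ)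
    (hγ' : σ.IsPathOf P γ') (hhead : γ.head? = γ'.head?) (hlast : γ.getLast? = γ'.getLast?) :
    ∃ δ, σ.IsLoopOf P δ ∧ σ.omega δ = σ.omega γ - σ.omega γ' := by
  obtain ⟨γ₀, x, rfl⟩ : ∃ γ₀ x, γ = γ₀ ++ [x] :=
    ⟨_, _, (List.dropLast_append_getLast hγ.1.1).symm⟩
  have hrev := hγ'.reverse
  obtain ⟨t, ht⟩ : ∃ t, γ'.reverse = x :: t :=
    List.head?_eq_some_iff.1 (by simpa [List.head?_reverse] using hlast.symm)
  rw [ht] at hrev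
  refine ⟨γ₀ ++ x :: t, ⟨isPathOf_of_isPattern hP (by simp) ?_ ?_, ?_⟩, ?_⟩
  · simpa using hγ.1.2.1.append_overlap (l₃ := t) hrev.1.2.1 (by simp)
  · intro c hc
    rcases List.mem_append.1 hc with hc | hc
    · exact hγ.2 c (by simp [hc])
    · exact hrev.2 c hc
  · have hδhead : (γ₀ ++ x :: t).head? = (γ₀ ++ [x]).head? := by cases γ₀ <;> rfl
    rw [hδhead, hhead, List.getLast?_append_of_ne_nil _ (by simp), ← ht, List.getLast?_reverse]
  · rw [omega_append_cons, ← ht, omega_reverse σ hσ, sub_eq_add_neg]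

theorem IsLoopOf.split {s t w : List (V × A)} {x : V × A}
    (h : σ.IsLoopOf P (s ++ x :: t ++ x :: w)) :
    σ.IsLoopOf P (x :: t ++ [x]) ∧ σ.IsLoopOf P (s ++ x :: w) ∧
      σ.omega (s ++ x :: t ++ x :: w) = σ.omega (x :: t ++ [x]) + σ.omega (s ++ x :: w) := by
  obtain ⟨hpath, hloop⟩ := h
  have hchain := hpath.1.2.1
  refine ⟨⟨hpath.of_subset (by simp) (hchain.infix ⟨s, w, by simp⟩) ?_,
    by rw [List.getLast?_concat]; rfl⟩, ⟨hpath.of_subset (by simp) ?_ ?_, ?_⟩, ?_⟩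
  · intro c
    simp only [List.mem_append, List.mem_cons]
    tauto
  · have h₁ : (s ++ [x]).IsChain _ := hchain.infix ⟨[], t ++ x :: w, by simp⟩
    have h₂ : ([x] ++ w).IsChain _ := hchain.infix ⟨s ++ x :: t, [], by simp⟩
    simpa using h₁.append_overlap h₂ (by simp)
  · intro c
    simp only [List.mem_append, List.mem_cons]
    tauto
  · have hhead : (s ++ x :: w).head? = (s ++ x :: t ++ x :: w).head? := by cases s <;> rfl
    rw [hhead, hloop, List.getLast?_append_of_ne_nil _ (by simp),
      List.getLast?_append_of_ne_nil _ (by simp)]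
  · have e : s ++ x :: t ++ x :: w = s ++ x :: (t ++ x :: w) := by simp
    rw [e, omega_append_cons σ s x, ← List.cons_append, omega_append_cons σ (x :: t) x w,
      omega_append_cons σ s x w]
    abel

theorem IsLoopOf.exists_nodup_dropLast {l : List (V × A)} (hl : σ.IsLoopOf P l)
    (hω : σ.omega l ≠ 0) : ∃ l', σ.IsLoopOf P l' ∧ l'.dropLast.Nodup ∧ σ.omega l' ≠ 0 := by
  induction hn : l.length using Nat.strong_induction_on generalizing l with
  | _ n ih =>
  by_cases hnd : l.dropLast.Nodup
  · exact ⟨l, hl, hnd, hω⟩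
  obtain ⟨x, s, t, u, hu⟩ := List.exists_eq_append_cons_append_cons_of_not_nodup hnd
  obtain ⟨w, hw, rfl⟩ : ∃ w, w ≠ [] ∧ l = s ++ x :: t ++ x :: w := by
    refine ⟨u ++ [l.getLast hl.1.1.1], by simp, ?_⟩
    conv_lhs => rw [← List.dropLast_append_getLast hl.1.1.1, hu]
    simp
  obtain ⟨hinner, houter, hsplit⟩ := hl.split
  rw [hsplit] at hω
  by_cases hinner0 : σ.omega (x :: t ++ [x]) = 0
  · exact ih _ (by simp at hn ⊢; omega) houter (by rwa [hinner0, zero_add] at hω) rfl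
  · have := List.length_pos_iff.2 hw
    exact ih _ (by simp at hn ⊢; omega) hinner hinner0 rfl

end Subst

abbrev WangCell (C : Type*) := (ℤ × ℤ) × (WangTile C × Dir)

section SigmaT

variable {C : Type*} {a b : WangTile C} {u : ℤ × ℤ}

theorem WangMatch.exists_dirVec (h : WangMatch a b u) : ∃ d, dirVec d = u := by
  rcases h with ⟨rfl, -⟩ | ⟨rfl, -⟩ | ⟨rfl, -⟩ | ⟨rfl, -⟩
  exacts [⟨.right, rfl⟩, ⟨.left, rfl⟩, ⟨.up, rfl⟩, ⟨.down, rfl⟩]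

theorem WangMatch.symm (h : WangMatch a b u) : WangMatch b a (-u) := by
  unfold WangMatch
  rcases h with ⟨rfl, h⟩ | ⟨rfl, h⟩ | ⟨rfl, h⟩ | ⟨rfl, h⟩ <;> simp [h]

theorem WangMatch.odd (h : WangMatch a b u) : Odd (u.1 + u.2) := by
  obtain ⟨d, rfl⟩ := h.exists_dirVec
  cases d <;> decide

variable {T : Finset (WangTile C)} {c c' : WangCell C}

def PointsTo (T : Finset (WangTile C)) (c c' : WangCell C) : Prop :=
  c.2.1 ∈ T ∧ c'.2.1 ∈ T ∧ WangMatch c.2.1 c'.2.1 (c'.1 - c.1) ∧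
    dirVec c.2.2 = c'.1 - c.1 ∧ dirVec c'.2.2 ≠ -(c'.1 - c.1)

theorem PointsTo.not_pointsTo (h : PointsTo T c c') : ¬ PointsTo T c' c :=
  fun h' => h.2.2.2.2 (by rw [neg_sub]; exact h'.2.2.2.1)

theorem sigmaT_ruleVec (c c' : WangCell C) :
    (sigmaT T).ruleVec c c' =
      if PointsTo T c c' then some (1, 0) else if PointsTo T c' c then some (-1, 0) else none := by
  have hrule : ∀ c c' : WangCell C, (sigmaT T).rule c.2 c'.2 (c'.1 - c.1) =
      if PointsTo T c c' then some (1, 0) else none := fun c c' => if_congr Iff.rfl rfl rfl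
  unfold Subst.ruleVec
  rw [hrule, hrule]
  by_cases h : PointsTo T c c'
  · simp [h]
  · by_cases h' : PointsTo T c' c <;> simp [h, h']

theorem isSome_sigmaT_ruleVec_iff :
    ((sigmaT T).ruleVec c c').isSome ↔ PointsTo T c c' ∨ PointsTo T c' c := by
  rw [sigmaT_ruleVec]
  split_ifs <;> simp_all

theorem PointsTo.sigmaT_ruleVec (h : PointsTo T c c') : (sigmaT T).ruleVec c c' = some (1, 0) := by
  simp [_root_.sigmaT_ruleVec, h]

theorem sigmaT_stepVec_swap (c c' : WangCell C) :
    (sigmaT T).stepVec c' c = -(sigmaT T).stepVec c c' := by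
  simp only [Subst.stepVec, sigmaT_ruleVec]
  by_cases h : PointsTo T c c'
  · simp [h, h.not_pointsTo]
  · by_cases h' : PointsTo T c' c <;> simp [h, h']

theorem wangMatch_of_isSome_sigmaT_ruleVec (h : ((sigmaT T).ruleVec c c').isSome) :
    c.2.1 ∈ T ∧ c'.2.1 ∈ T ∧ WangMatch c.2.1 c'.2.1 (c'.1 - c.1) := by
  rcases isSome_sigmaT_ruleVec_iff.1 h with h | h
  · exact ⟨h.1, h.2.1, h.2.2.1⟩
  · exact ⟨h.2.1, h.1, by simpa using h.2.2.1.symm⟩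

end SigmaT

section Cycles

variable {C : Type*} {T : Finset (WangTile C)}

theorem not_consistent_of_zmod_cycle {m : ℕ} [NeZero m] (hm : 3 ≤ m)
    {a : ZMod m → WangTile C} {p : ZMod m → ℤ × ℤ} (haT : ∀ i, a i ∈ T)
    (hp : Function.Injective p) (hmatch : ∀ i, WangMatch (a i) (a (i + 1)) (p (i + 1) - p i)) :
    ¬ (sigmaT T).Consistent := by
  choose d hd using fun i => (hmatch i).exists_dirVec
  have htwo : (1 + 1 : ZMod m) ≠ 0 := by
    rw [one_add_one_eq_two, ← Nat.cast_ofNat, Ne, ZMod.natCast_eq_zero_iff]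
    exact fun h => absurd (Nat.le_of_dvd two_pos h) (by omega)
  have hpoints (i : ZMod m) : PointsTo T (p i, a i, d i) (p (i + 1), a (i + 1), d (i + 1)) := by
    refine ⟨haT i, haT _, hmatch i, hd i, ?_⟩
    rw [hd, neg_sub, Ne, sub_left_inj, hp.eq_iff, add_assoc, add_eq_left]
    exact htwo
  refine Subst.not_consistent_of_zmod_cycle hp (fun i => (hpoints i).sigmaT_ruleVec) ?_
  simpa using NeZero.ne m

theorem AdmitsCycle.exists_zmod_cycle (h : AdmitsCycle T) :
    ∃ m, ∃ a : ZMod (m + 4) → WangTile C, ∃ p : ZMod (m + 4) → ℤ × ℤ, (∀ i, a i ∈ T) ∧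
      Function.Injective p ∧ ∀ i, WangMatch (a i) (a (i + 1)) (p (i + 1) - p i) := by
  obtain ⟨n, a, p, hn, haT, hinj, hp, ha, hmatch⟩ := h
  obtain ⟨m, rfl⟩ : ∃ m, n = m + 4 + 1 := ⟨n - 5, by omega⟩
  simp only [Nat.add_sub_cancel] at hinj hp ha hmatch
  have hsucc (i : ZMod (m + 4)) :
      a (i + 1).val = a (i.val + 1) ∧ p (i + 1).val = p (i.val + 1) := by
    rw [show i + 1 = ((i.val + 1 : ℕ) : ZMod (m + 4)) by simp, ZMod.val_natCast]
    rcases (show i.val + 1 < m + 4 ∨ i.val + 1 = m + 4 by have := i.val_lt; omega) with hi | hi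
    · rw [Nat.mod_eq_of_lt hi]
      exact ⟨rfl, rfl⟩
    · rw [hi, Nat.mod_self]
      exact ⟨ha.symm, hp.symm⟩
  refine ⟨m, fun i => a i.val, fun i => p i.val, fun i => haT _ (by have := i.val_lt; omega),
    fun i j h => ZMod.val_injective _ (hinj _ i.val_lt _ j.val_lt h), fun i => ?_⟩
  simp only [(hsucc i).1, (hsucc i).2]
  exact hmatch _ i.val_lt

theorem admitsCycle_of_closed_walk {k : ℕ} {f : ℕ → WangCell C}
    (hstep : ∀ i < k, ((sigmaT T).ruleVec (f i) (f (i + 1))).isSome) (hclosed : f k = f 0)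
    (hinj : ∀ i < k, ∀ j < k, (f i).1 = (f j).1 → i = j)
    (hω : ∑ i ∈ Finset.range k, (sigmaT T).stepVec (f i) (f (i + 1)) ≠ 0) : AdmitsCycle T := by
  have hmatch (i : ℕ) (hi : i < k) := wangMatch_of_isSome_sigmaT_ruleVec (hstep i hi)
  have hk_even : Even k :=
    even_of_odd_increments (s := fun i => (f i).1.1 + (f i).1.2)
      (fun i hi => by simpa [add_sub_add_comm] using (hmatch i hi).2.2.odd) (by rw [hclosed])
  have hk0 : k ≠ 0 := by
    rintro rfl
    simp at hω
  have hk2 : k ≠ 2 := by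
    rintro rfl
    simp [Finset.sum_range_succ, hclosed, sigmaT_stepVec_swap (f 0)] at hω
  refine ⟨k + 1, fun i => (f i).2.1, fun i => (f i).1, ?_, fun i hi => ?_, ?_, ?_, ?_,
    fun i hi => (hmatch i (by omega)).2.2⟩
  · obtain ⟨j, rfl⟩ := hk_even
    omega
  · rcases (show i < k ∨ i = k by omega) with hi | rfl
    · exact (hmatch i hi).1
    · simpa [hclosed] using (hmatch 0 (by omega)).1
  · simpa using hinj
  · simp [hclosed]
  · simp [hclosed]

theorem admitsCycle_of_isLoopOf {P : Finset (WangCell C)} (hP : IsPattern P)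
    {l : List (WangCell C)} (hl : (sigmaT T).IsLoopOf P l) (hnodup : l.dropLast.Nodup)
    (hω : (sigmaT T).omega l ≠ 0) : AdmitsCycle T := by
  obtain ⟨⟨⟨hne, hchain, -⟩, hlP⟩, hloop⟩ := hl
  obtain ⟨c, hc⟩ := List.exists_mem_of_ne_nil l hne
  have hmem (i : ℕ) : l.getD i c ∈ P := by
    rcases lt_or_ge i l.length with hi | hi
    · exact hlP _ (List.getD_eq_getElem l c hi ▸ List.getElem_mem hi)
    · rw [List.getD_eq_default l c hi]
      exact hlP c hc
  refine admitsCycle_of_closed_walk (k := l.length - 1) (f := fun i => l.getD i c)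
    (fun i hi => hchain.getD c (by omega)) ?_ (fun i hi j hj hij => ?_)
    (by rwa [← Subst.omega_eq_sum_getD])
  · rw [List.getD_eq_getElem?_getD, List.getD_eq_getElem?_getD, ← List.getLast?_eq_getElem?,
      ← hloop, List.head?_eq_getElem?]
  · have hcell := hP _ (hmem i) _ (hmem j) hij
    rw [List.getD_eq_getElem _ _ (by omega), List.getD_eq_getElem _ _ (by omega),
      ← List.getElem_dropLast (i := i) (by simpa), ← List.getElem_dropLast (i := j) (by simpa)]
      at hcell
    exact hnodup.getElem_inj_iff.1 hcell

theorem admitsCycle_of_not_consistent (h : ¬ (sigmaT T).Consistent) : AdmitsCycle T := by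
  obtain ⟨P, hP, -, γ, γ', hγ, hγ', hhead, hlast, hne⟩ :
      ∃ P, IsPattern P ∧ (sigmaT T).Covered P ∧ ∃ γ γ', (sigmaT T).IsPathOf P γ ∧
        (sigmaT T).IsPathOf P γ' ∧ γ.head? = γ'.head? ∧ γ.getLast? = γ'.getLast? ∧
          (sigmaT T).omega γ ≠ (sigmaT T).omega γ' := by
    simpa [Subst.Consistent, Subst.ConsistentOn] using h
  obtain ⟨δ, hδ, hδω⟩ :=
    hγ.exists_isLoopOf_omega_eq_sub hP sigmaT_stepVec_swap hγ' hhead hlast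
  obtain ⟨l, hl, hnodup, hω⟩ := hδ.exists_nodup_dropLast (by rwa [hδω, sub_ne_zero])
  exact admitsCycle_of_isLoopOf hP hl hnodup hω

end Cycles

/-- Theorem `undcons`, reduction.  A finite Wang tile set
`T` admits a valid tiling of a cycle if and only if the substitution `σ_T`
is not consistent. -/
theorem admitsCycle_iff_not_consistent {C : Type*} (T : Finset (WangTile C)) :
    AdmitsCycle T ↔ ¬ (sigmaT T).Consistent := by
  refine ⟨fun h => ?_, admitsCycle_of_not_consistent⟩
  obtain ⟨m, a, p, haT, hp, hmatch⟩ := h.exists_zmod_cycle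
  exact not_consistent_of_zmod_cycle (by omega) haT hp hmatch
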